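/- arXiv:2605.19756 — 3 statements merged into one kernel-verified Lean document; each statement's English description precedes it below -/
import Mathlib

section
/- If a > 4, then for every b ∈ ℝ the EOS map F_{a,b} is bimodal: the set of critical points of F_{a,b} (points where F_{a,b}' vanishes) equals {−c, c}, where c = (1/a)·ln((1 + r)/(1 − r)) with r = √(1 − 4/a), and c > 0. -/
/-- The EOS map with parameters `a`, `b`: `F_{a,b}(x) = x + b - 1/(e^{-ax} + 1)`. -/
noncomputable def eosMap (a b x : ℝ) : ℝ := x + b - 1 / (Real.exp (-(a * x)) + 1)

/-!
The EOS map is `x + b - σ(a x)` for the logistic sigmoid `σ`, so its derivative vanishes exactly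
where `σ(a x) (1 - σ(a x)) = 1 / a`. Since `1 / a = p (1 - p)` for `p = (1 + r) / 2`, this means
`σ(a x) = p` or `σ(-a x) = 1 - σ(a x) = p`, and inverting `σ` by the logit
`p ↦ log (p / (1 - p))` gives `a x = ± log ((1 + r) / (1 - r))`.
-/

open Real

lemma mul_one_sub_eq_mul_one_sub_iff {R : Type*} [CommRing R] [NoZeroDivisors R] {s p : R} :
    s * (1 - s) = p * (1 - p) ↔ s = p ∨ s = 1 - p := by
  rw [← sub_eq_zero, show s * (1 - s) - p * (1 - p) = (s - p) * (1 - p - s) by ring,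
    mul_eq_zero, sub_eq_zero, sub_eq_zero, eq_comm (a := 1 - p)]

namespace Real

lemma sigmoid_log_div_one_sub {p : ℝ} (hp0 : 0 < p) (hp1 : p < 1) :
    sigmoid (log (p / (1 - p))) = p := by
  have : 0 < 1 - p := sub_pos.mpr hp1
  rw [sigmoid_def, ← log_inv, exp_log (by positivity)]
  field_simp
  ring

lemma sigmoid_eq_iff_eq_log {p t : ℝ} (hp0 : 0 < p) (hp1 : p < 1) :
    sigmoid t = p ↔ t = log (p / (1 - p)) := by
  conv_lhs => rw [← sigmoid_log_div_one_sub hp0 hp1]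
  exact sigmoid_inj

lemma sigmoid_eq_one_sub_iff {p t : ℝ} : sigmoid t = 1 - p ↔ sigmoid (-t) = p := by
  rw [sigmoid_neg, sub_eq_iff_eq_add, eq_comm, ← sub_eq_iff_eq_add', eq_comm]

end Real

lemma eosMap_eq_sub_sigmoid (a b : ℝ) : eosMap a b = fun x => x + b - sigmoid (a * x) := by
  funext x
  rw [eosMap, sigmoid_def, one_div, add_comm (exp _)]

lemma hasDerivAt_eosMap (a b x : ℝ) :
    HasDerivAt (eosMap a b) (1 - a * (sigmoid (a * x) * (1 - sigmoid (a * x)))) x := by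
  rw [eosMap_eq_sub_sigmoid]
  exact (((hasDerivAt_id' x).add_const b).sub
    ((hasDerivAt_sigmoid (a * x)).comp x ((hasDerivAt_id' x).const_mul a))).congr_deriv (by ring)

lemma deriv_eosMap_eq_zero_iff {a : ℝ} (ha : a ≠ 0) (b x : ℝ) :
    deriv (eosMap a b) x = 0 ↔ sigmoid (a * x) * (1 - sigmoid (a * x)) = 1 / a := by
  rw [(hasDerivAt_eosMap a b x).deriv, sub_eq_zero, eq_div_iff ha, eq_comm, mul_comm]

lemma mul_eq_iff_eq_one_div_mul {a x y : ℝ} (ha : a ≠ 0) : a * x = y ↔ x = 1 / a * y := by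
  rw [one_div, eq_inv_mul_iff_mul_eq₀ ha]

lemma deriv_eosMap_eq_zero_iff_eq_neg_or_eq {a b p x : ℝ} (ha : a ≠ 0) (hp0 : 0 < p)
    (hp1 : p < 1) (hpa : p * (1 - p) = 1 / a) :
    deriv (eosMap a b) x = 0 ↔
      x = -(1 / a * log (p / (1 - p))) ∨ x = 1 / a * log (p / (1 - p)) := by
  rw [deriv_eosMap_eq_zero_iff ha]
  nth_rw 1 [← hpa]
  rw [mul_one_sub_eq_mul_one_sub_iff, sigmoid_eq_one_sub_iff, ← mul_neg,
    sigmoid_eq_iff_eq_log hp0 hp1, sigmoid_eq_iff_eq_log hp0 hp1, mul_eq_iff_eq_one_div_mul ha,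
    mul_eq_iff_eq_one_div_mul ha, neg_eq_iff_eq_neg, or_comm]

/-- If `a > 4`, the EOS map `F_{a,b}` is bimodal: its set of critical points
(points where the derivative vanishes) equals `{-c, c}` where
`c = (1/a)·ln((1+r)/(1-r))` with `r = √(1 - 4/a)`, and `c > 0`. -/
theorem eosMap_critical_points (a b : ℝ) (ha : 4 < a) :
    let r : ℝ := Real.sqrt (1 - 4 / a)
    let c : ℝ := (1 / a) * Real.log ((1 + r) / (1 - r))
    {x : ℝ | deriv (eosMap a b) x = 0} = {-c, c} ∧ 0 < c := by
  intro r c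
  have ha0 : 0 < a := by linarith
  have hdisc : 0 < 1 - 4 / a := by rw [sub_pos, div_lt_one ha0]; exact ha
  have hr0 : 0 < r := sqrt_pos.mpr hdisc
  have hr1 : r < 1 := (sqrt_lt' one_pos).mpr (by linarith [div_pos four_pos ha0])
  have hr2 : r ^ 2 = 1 - 4 / a := sq_sqrt hdisc.le
  have hlogit : (1 + r) / 2 / (1 - (1 + r) / 2) = (1 + r) / (1 - r) := by
    field_simp
    ring
  have hpa : (1 + r) / 2 * (1 - (1 + r) / 2) = 1 / a := by
    rw [show (1 + r) / 2 * (1 - (1 + r) / 2) = (1 - r ^ 2) / 4 by ring, hr2]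
    ring
  refine ⟨Set.ext fun x => ?_, ?_⟩
  · have h := deriv_eosMap_eq_zero_iff_eq_neg_or_eq (b := b) (x := x) ha0.ne'
      (by linarith) (by linarith) hpa
    rwa [hlogit] at h
  · exact mul_pos (by positivity) (log_pos ((one_lt_div (by linarith)).mpr (by linarith)))
end

section
/- If a ≥ 4 and b ∈ ℝ, then the EOS map F_{a,b} has negative Schwarzian derivative: S F_{a,b}(x) < 0 for every x ∈ ℝ with F_{a,b}'(x) ≠ 0. -/
/-- The Schwarzian derivative of `f` at `x`: `Sf(x) = f'''(x)/f'(x) - (3/2)·(f''(x)/f'(x))²`. -/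
noncomputable def schwarzian (f : ℝ → ℝ) (x : ℝ) : ℝ :=
  deriv (deriv (deriv f)) x / deriv f x - (3 / 2) * (deriv (deriv f) x / deriv f x) ^ 2

/-!
Write `F = x + b - σ(a x)` with the logistic function `σ`, whose derivative is `σ (1 - σ)`.
In terms of `s = σ (1 - σ) ∈ (0, 1/4]` one finds `F' = 1 - a s`, `F'' = -a² s (1 - 2σ)` and
`F''' = -a³ s (1 - 6 s)`; since `(1 - 2σ)² = 1 - 4 s`, the Schwarzian collapses to
`S F = -a³ s (2 + (a - 12) s) / (2 (1 - a s)²)`. Finally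
`2 + (a - 12) s = 2 (1 - 4 s) + (a - 4) s` is a sum of two nonnegative terms, and both vanish
only when `s = 1/4` and `a = 4`, i.e. where `F' = 0`.
-/

open Real

lemma hasDerivAt_sigmoid_mul (a x : ℝ) :
    HasDerivAt (fun x => sigmoid (a * x))
      (a * (sigmoid (a * x) * (1 - sigmoid (a * x)))) x :=
  ((hasDerivAt_sigmoid (a * x)).comp x ((hasDerivAt_id' x).const_mul a)).congr_deriv
    (by ring)

lemma deriv_comp_sigmoid_mul {p p' : ℝ → ℝ} (hp : ∀ t, HasDerivAt p (p' t) t) (a : ℝ) :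
    deriv (fun x => p (sigmoid (a * x))) =
      fun x => a * (sigmoid (a * x) * (1 - sigmoid (a * x))) * p' (sigmoid (a * x)) := by
  funext x
  rw [mul_comm]
  exact ((hp _).comp x (hasDerivAt_sigmoid_mul a x)).deriv

lemma deriv_eosMap (a b : ℝ) :
    deriv (eosMap a b) = fun x => 1 - a * (sigmoid (a * x) * (1 - sigmoid (a * x))) := by
  funext x
  rw [eosMap_eq_sub_sigmoid]
  exact (((hasDerivAt_id x).add_const b).sub (hasDerivAt_sigmoid_mul a x)).deriv

lemma deriv_deriv_eosMap (a b : ℝ) :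
    deriv (deriv (eosMap a b)) = fun x =>
      -(a ^ 2 * (sigmoid (a * x) * (1 - sigmoid (a * x))) * (1 - 2 * sigmoid (a * x))) := by
  rw [deriv_eosMap, deriv_comp_sigmoid_mul (p := fun t => 1 - a * (t * (1 - t)))
    (p' := fun t => -(a * (1 - 2 * t)))]
  · funext x; ring
  · intro t
    exact ((((hasDerivAt_id' t).mul ((hasDerivAt_id' t).const_sub 1)).const_mul a).const_sub
      1).congr_deriv (by ring)

lemma deriv_deriv_deriv_eosMap (a b : ℝ) :
    deriv (deriv (deriv (eosMap a b))) = fun x =>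
      -(a ^ 3 * (sigmoid (a * x) * (1 - sigmoid (a * x))) *
        (1 - 6 * (sigmoid (a * x) * (1 - sigmoid (a * x))))) := by
  rw [deriv_deriv_eosMap, deriv_comp_sigmoid_mul
    (p := fun t => -(a ^ 2 * (t * (1 - t)) * (1 - 2 * t)))
    (p' := fun t => -(a ^ 2 * (1 - 6 * t + 6 * t ^ 2)))]
  · funext x; ring
  · intro t
    exact ((((hasDerivAt_id' t).mul ((hasDerivAt_id' t).const_sub 1)).const_mul (a ^ 2)).mul
      (((hasDerivAt_id' t).const_mul 2).const_sub 1)).neg.congr_deriv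
      (by simp only [Pi.mul_apply]; ring)

lemma schwarzian_eosMap (a b x : ℝ) :
    schwarzian (eosMap a b) x =
      -(a ^ 3 * (sigmoid (a * x) * (1 - sigmoid (a * x))) *
        (2 + (a - 12) * (sigmoid (a * x) * (1 - sigmoid (a * x))))) /
        (2 * (1 - a * (sigmoid (a * x) * (1 - sigmoid (a * x)))) ^ 2) := by
  rw [schwarzian, deriv_deriv_deriv_eosMap, deriv_deriv_eosMap, deriv_eosMap]
  beta_reduce
  generalize sigmoid (a * x) = σ
  -- where `F' = 0` both sides are junk divisions by zero
  rcases eq_or_ne (1 - a * (σ * (1 - σ))) 0 with h | h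
  · simp [h]
  · field_simp
    ring

lemma mul_one_sub_le_one_div_four (t : ℝ) : t * (1 - t) ≤ 1 / 4 := by
  nlinarith [sq_nonneg (2 * t - 1)]

lemma two_add_sub_twelve_mul_pos {a s : ℝ} (ha : 4 ≤ a) (hs : 0 ≤ s) (hs' : s ≤ 1 / 4)
    (h : 1 - a * s ≠ 0) : 0 < 2 + (a - 12) * s := by
  have hsum : 2 + (a - 12) * s = 2 * (1 - 4 * s) + (a - 4) * s := by ring
  have hdiff : 1 - a * s = (1 - 4 * s) - (a - 4) * s := by ring
  have h4 : 0 ≤ (a - 4) * s := mul_nonneg (by linarith) hs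
  by_contra! hle
  exact h (by linarith)

/-- If `a ≥ 4` and `b ∈ ℝ`, the EOS map has negative Schwarzian derivative:
`S F_{a,b}(x) < 0` for every `x` with `F_{a,b}'(x) ≠ 0`. -/
theorem eosMap_schwarzian_neg (a b : ℝ) (ha : 4 ≤ a) :
    ∀ x : ℝ, deriv (eosMap a b) x ≠ 0 → schwarzian (eosMap a b) x < 0 := by
  intro x hx
  rw [deriv_eosMap] at hx
  rw [schwarzian_eosMap]
  set s := sigmoid (a * x) * (1 - sigmoid (a * x))
  have hs : 0 < s := mul_pos (sigmoid_pos _) (sub_pos.2 (sigmoid_lt_one _))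
  have hpoly : 0 < 2 + (a - 12) * s :=
    two_add_sub_twelve_mul_pos ha hs.le (mul_one_sub_le_one_div_four _) hx
  apply div_neg_of_neg_of_pos
  · exact neg_neg_of_pos (by positivity)
  · positivity
end

section
/- Let a > 0 and b ∈ ℝ, and let σ(t) = 1/(1 + e^{−t}). If σ(a(b−1)) ≤ b and b ≤ σ(ab), then the EOS map F_{a,b} maps the interval [b−1, b] into itself: F_{a,b}([b−1, b]) ⊆ [b−1, b]. -/
/-- The logistic sigmoid `σ(t) = 1/(1 + e^{-t})`. -/
noncomputable def sigmoid (t : ℝ) : ℝ := 1 / (1 + Real.exp (-t))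

lemma sigmoid_eq_real_sigmoid : sigmoid = Real.sigmoid := by
  funext t
  rw [sigmoid, Real.sigmoid_def, one_div]

lemma eosMap_eq (a b x : ℝ) : eosMap a b x = x + b - sigmoid (a * x) := by
  rw [eosMap, sigmoid, add_comm (Real.exp _)]

lemma strictMono_mul_one_add_exp_neg_mul (a : ℝ) :
    StrictMono fun t : ℝ => t * (1 + Real.exp (-(a * t))) := by
  refine strictMono_of_hasDerivAt_pos (f' := fun t => 1 + Real.exp (-(a * t)) * (1 - a * t))
    (fun t => ?_) fun t => ?_
  · have hexp : HasDerivAt (fun t => 1 + Real.exp (-(a * t))) (Real.exp (-(a * t)) * -a) t := by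
      simpa using ((hasDerivAt_id t).const_mul a).neg.exp.const_add 1
    exact ((hasDerivAt_id' t).mul hexp).congr_deriv (by ring)
  · have hlt : a * t - 1 < Real.exp (a * t) := by linarith [Real.add_one_le_exp (a * t)]
    have hmul := mul_lt_mul_of_pos_left hlt (Real.exp_pos (-(a * t)))
    rw [← Real.exp_add, neg_add_cancel, Real.exp_zero] at hmul
    linarith

lemma le_sigmoid_mul_iff (a x : ℝ) :
    x ≤ sigmoid (a * x) ↔ x * (1 + Real.exp (-(a * x))) ≤ 1 := by
  rw [sigmoid, le_div_iff₀ (by positivity)]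

lemma le_sigmoid_mul_of_le {a x b : ℝ} (hxb : x ≤ b) (hb : b ≤ sigmoid (a * b)) :
    x ≤ sigmoid (a * x) := by
  rw [le_sigmoid_mul_iff] at hb ⊢
  exact ((strictMono_mul_one_add_exp_neg_mul a).monotone hxb).trans hb

lemma sigmoid_mul_le_add_one_of_le {a x b : ℝ} (hbx : b - 1 ≤ x)
    (hb : sigmoid (a * (b - 1)) ≤ b) : sigmoid (a * x) ≤ x + 1 := by
  have hneg : ∀ t, sigmoid (a * -t) = 1 - sigmoid (a * t) := fun t => by
    rw [mul_neg, sigmoid_eq_real_sigmoid, Real.sigmoid_neg]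
  have hx := le_sigmoid_mul_of_le (a := a) (neg_le_neg hbx) (by rw [hneg]; linarith)
  rw [hneg] at hx
  linarith

theorem eosMap_mapsTo_general (a b : ℝ)
    (h1 : sigmoid (a * (b - 1)) ≤ b) (h2 : b ≤ sigmoid (a * b)) :
    Set.MapsTo (eosMap a b) (Set.Icc (b - 1) b) (Set.Icc (b - 1) b) := by
  rintro x ⟨hbx, hxb⟩
  have hupper := le_sigmoid_mul_of_le hxb h2
  have hlower := sigmoid_mul_le_add_one_of_le hbx h1
  rw [eosMap_eq]
  constructor <;> linarith

/-- If `a > 0`, `σ(a(b-1)) ≤ b` and `b ≤ σ(ab)`, then the EOS map maps the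
interval `[b-1, b]` into itself. -/
theorem eosMap_mapsTo (a b : ℝ) (ha : 0 < a)
    (h1 : sigmoid (a * (b - 1)) ≤ b) (h2 : b ≤ sigmoid (a * b)) :
    Set.MapsTo (eosMap a b) (Set.Icc (b - 1) b) (Set.Icc (b - 1) b) :=
  eosMap_mapsTo_general a b h1 h2
end
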